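/- Let H be a finite graph with positive edge weights w in which every edge weight is an integer multiple of 1/2, and enumerate the edges as e_1, …, e_m. Define perturbed weights w'(e_i) = w(e_i) + 1/2^{i+1}. Then for every pair of vertices u, v of H there is a unique shortest path between u and v with respect to w', and this path is also a shortest path between u and v with respect to w. -/

import Mathlib

/-!
Write `w' = w + δ`. On a path, `δ` is a sum of distinct powers `2^-(i+2)`, so it lies in
`[0, 1/2)` and, by uniqueness of binary expansions, determines the edge set of the path and
hence the path. Since `w`-lengths of paths are multiples of `1/2`, comparing `w'`-lengths
compares `w`-lengths first and breaks ties by `δ`, which never ties for distinct paths.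
-/

open SimpleGraph Finset

/-- The weighted length of a walk: the sum of the weights of its edges. -/
def walkWeight {V : Type*} {H : SimpleGraph V} (w : Sym2 V → ℝ) {u v : V}
    (p : H.Walk u v) : ℝ :=
  (p.edges.map w).sum

theorem le_of_lt_add_of_mem_zmultiples {G : Type*} [AddCommGroup G] [PartialOrder G]
    [IsOrderedAddMonoid G] {a x y : G} (ha : 0 < a) (hx : x ∈ AddSubgroup.zmultiples a)
    (hy : y ∈ AddSubgroup.zmultiples a) (h : x < y + a) : x ≤ y := by
  obtain ⟨k, rfl⟩ := hx
  obtain ⟨l, rfl⟩ := hy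
  rw [← add_one_zsmul, zsmul_lt_zsmul_iff_left ha, Int.lt_add_one_iff] at h
  exact (zsmul_le_zsmul_iff_left ha).mpr h

theorem sum_inv_two_pow_lt_two (s : Finset ℕ) : ∑ j ∈ s, (2⁻¹ : ℝ) ^ j < 2 := by
  obtain ⟨n, hn⟩ := s.exists_nat_subset_range
  have hpos : (0 : ℝ) < 2⁻¹ ^ n := by positivity
  calc ∑ j ∈ s, (2⁻¹ : ℝ) ^ j ≤ ∑ j ∈ range n, (2⁻¹ : ℝ) ^ j :=
        sum_le_sum_of_subset_of_nonneg hn fun _ _ _ => by positivity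
    _ = 2 - 2 * 2⁻¹ ^ n := by rw [geom_sum_eq (by norm_num)]; ring
    _ < 2 := by linarith

theorem sum_inv_two_pow_injective :
    Function.Injective fun s : Finset ℕ => ∑ j ∈ s, (2⁻¹ : ℝ) ^ j := by
  intro s t hst
  obtain ⟨n, hn⟩ := (s ∪ t).exists_nat_subset_range
  have hs := subset_union_left.trans hn
  have ht := subset_union_right.trans hn
  have hreflect : Set.InjOn (n - ·) (range n : Set ℕ) := fun i hi j hj h => by
    simp only [coe_range, Set.mem_Iio] at hi hj h
    omega
  have hscale : ∀ r ⊆ range n,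
      (∑ j ∈ r, (2⁻¹ : ℝ) ^ j) * 2 ^ n = ((∑ i ∈ r.image (n - ·), 2 ^ i : ℕ) : ℝ) := by
    intro r hr
    rw [sum_image (hreflect.mono (mod_cast hr)), sum_mul]
    push_cast
    refine sum_congr rfl fun j hj => ?_
    rw [pow_sub₀ _ two_ne_zero (mem_range.mp (hr hj)).le, inv_pow, mul_comm]
  have himage : s.image (n - ·) = t.image (n - ·) := by
    refine geomSum_injective le_rfl (Nat.cast_injective (R := ℝ) ?_)
    rw [← hscale s hs, ← hscale t ht]
    exact congrArg (· * (2 : ℝ) ^ n) hst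
  exact (image_eq_image_iff_of_injOn hreflect hs ht).mp himage

namespace Set.InjOn

variable {α : Type*} {f : α → ℕ}

theorem sum_inv_two_pow_lt_two {s : Finset α} (hf : Set.InjOn f s) :
    ∑ a ∈ s, (2⁻¹ : ℝ) ^ f a < 2 := by
  rw [← sum_image hf]
  exact _root_.sum_inv_two_pow_lt_two _

theorem eq_of_sum_inv_two_pow_eq {A : Set α} (hf : Set.InjOn f A) {s t : Finset α}
    (hs : ↑s ⊆ A) (ht : ↑t ⊆ A)
    (h : ∑ a ∈ s, (2⁻¹ : ℝ) ^ f a = ∑ a ∈ t, (2⁻¹ : ℝ) ^ f a) : s = t := by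
  rw [← sum_image (hf.mono hs), ← sum_image (hf.mono ht)] at h
  exact_mod_cast (hf.image_eq_image_iff hs ht).mp (mod_cast sum_inv_two_pow_injective h)

end Set.InjOn

namespace SimpleGraph

variable {V : Type*} {H : SimpleGraph V}

theorem Walk.IsPath.eq_of_edgeSet_eq {u v : V} {p q : H.Walk u v} (hp : p.IsPath)
    (hq : q.IsPath) (h : p.edgeSet = q.edgeSet) : p = q := by
  induction p with
  | nil =>
    refine (edges_injective ?_).symm
    simpa [List.eq_nil_iff_forall_not_mem, Set.ext_iff] using h.symm
  | @cons u x _ hux p ih =>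
    cases q with
    | nil => exact absurd (by simpa using h) (Set.insert_nonempty _ _).ne_empty
    | @cons _ y _ huy q =>
      rw [cons_isPath_iff] at hp hq
      rw [edgeSet_cons, edgeSet_cons] at h
      have hmem : s(u, y) ∈ insert s(u, x) p.edgeSet := h ▸ Set.mem_insert _ _
      rcases hmem with hyx | hyp
      · obtain rfl : y = x := Sym2.congr_right.mp hyx
        have hp' : s(u, y) ∉ p.edgeSet := fun he => hp.2 (p.fst_mem_support_of_mem_edges he)
        have hq' : s(u, y) ∉ q.edgeSet := fun he => hq.2 (q.fst_mem_support_of_mem_edges he)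
        rw [ih hp.1 hq.1 (by rw [← Set.insert_sdiff_self_of_notMem hp', h,
          Set.insert_sdiff_self_of_notMem hq'])]
      · exact absurd (p.fst_mem_support_of_mem_edges hyp) hp.2

theorem Walk.coe_edges_toFinset_subset_edgeSet [DecidableEq V] {u v : V} (p : H.Walk u v) :
    ↑p.edges.toFinset ⊆ H.edgeSet :=
  fun _ he => p.edges_subset_edgeSet (List.mem_toFinset.mp he)

theorem finite_setOf_isPath [Finite H.edgeSet] (u v : V) :
    {p : H.Walk u v | p.IsPath}.Finite := by
  refine Set.Finite.of_finite_image ?_ fun p hp q hq h => hp.eq_of_edgeSet_eq hq h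
  refine (Set.toFinite H.edgeSet).finite_subsets.subset ?_
  rintro _ ⟨p, -, rfl⟩ e he
  exact p.edges_subset_edgeSet he

end SimpleGraph

section walkWeight

variable {V : Type*} {H : SimpleGraph V} {u v : V}

theorem walkWeight_add (f g : Sym2 V → ℝ) (p : H.Walk u v) :
    walkWeight (f + g) p = walkWeight f p + walkWeight g p :=
  List.sum_map_add

theorem walkWeight_nonneg {f : Sym2 V → ℝ} (hf : ∀ e ∈ H.edgeSet, 0 ≤ f e) (p : H.Walk u v) :
    0 ≤ walkWeight f p :=
  List.sum_nonneg (by simpa using fun e he => hf e (p.edges_subset_edgeSet he))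

theorem walkWeight_mem {f : Sym2 V → ℝ} {S : AddSubgroup ℝ} (hf : ∀ e ∈ H.edgeSet, f e ∈ S)
    (p : H.Walk u v) : walkWeight f p ∈ S :=
  S.list_sum_mem (by simpa using fun e he => hf e (p.edges_subset_edgeSet he))

theorem SimpleGraph.Walk.IsTrail.walkWeight_eq_sum [DecidableEq V] {p : H.Walk u v}
    (hp : p.IsTrail) (f : Sym2 V → ℝ) : walkWeight f p = ∑ e ∈ p.edges.toFinset, f e :=
  (List.sum_toFinset f hp.edges_nodup).symm

end walkWeight

section Perturbation

variable {V : Type*} {H : SimpleGraph V} {δ : Sym2 V → ℝ} {idx : Sym2 V → ℕ} {u v : V}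

theorem SimpleGraph.Walk.IsTrail.walkWeight_lt_half (hidx : Set.InjOn idx H.edgeSet)
    (hδ : ∀ e ∈ H.edgeSet, δ e = 2⁻¹ ^ (idx e + 2)) {p : H.Walk u v} (hp : p.IsTrail) :
    walkWeight δ p < 2⁻¹ := by
  classical
  have hsub := p.coe_edges_toFinset_subset_edgeSet
  have hlt := (hidx.mono hsub).sum_inv_two_pow_lt_two
  calc walkWeight δ p = (∑ e ∈ p.edges.toFinset, (2⁻¹ : ℝ) ^ idx e) * 2⁻¹ ^ 2 := by
        rw [hp.walkWeight_eq_sum, sum_mul]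
        exact sum_congr rfl fun e he => by rw [hδ e (hsub he), pow_add]
    _ < 2 * 2⁻¹ ^ 2 := by gcongr
    _ = 2⁻¹ := by norm_num

theorem SimpleGraph.Walk.IsPath.eq_of_walkWeight_eq (hidx : Set.InjOn idx H.edgeSet)
    (hδ : ∀ e ∈ H.edgeSet, δ e = 2⁻¹ ^ (idx e + 2)) {p q : H.Walk u v} (hp : p.IsPath)
    (hq : q.IsPath) (h : walkWeight δ p = walkWeight δ q) : p = q := by
  classical
  have hsubp := p.coe_edges_toFinset_subset_edgeSet
  have hsubq := q.coe_edges_toFinset_subset_edgeSet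
  rw [hp.isTrail.walkWeight_eq_sum, hq.isTrail.walkWeight_eq_sum,
    sum_congr rfl fun e he => hδ e (hsubp he), sum_congr rfl fun e he => hδ e (hsubq he)] at h
  have hedges := ((add_left_injective 2).comp_injOn hidx).eq_of_sum_inv_two_pow_eq
    hsubp hsubq h
  exact hp.eq_of_edgeSet_eq hq (by rw [← coe_edges_toFinset, ← coe_edges_toFinset, hedges])

end Perturbation

theorem statement_14_general {V : Type*} (H : SimpleGraph V)
    (w w' : Sym2 V → ℝ)
    (hhalf : ∀ e ∈ H.edgeSet, ∃ q : ℤ, w e = (q : ℝ) / 2)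
    (m : ℕ) (enum : H.edgeSet ≃ Fin m)
    -- the edge `e` with `enum e = i - 1` is the `i`-th edge `eᵢ`, so its perturbation
    -- `1/2^(i+1)` is `1/2^((enum e) + 2)`
    (hw' : ∀ e : H.edgeSet, w' (e : Sym2 V) = w (e : Sym2 V) + 1 / 2 ^ ((enum e : ℕ) + 2)) :
    ∀ u v : V, H.Reachable u v →
      ∃ p : H.Walk u v, p.IsPath ∧
        (∀ q : H.Walk u v, q.IsPath → walkWeight w' p ≤ walkWeight w' q) ∧
        (∀ q : H.Walk u v, q.IsPath →
          walkWeight w' q = walkWeight w' p → q = p) ∧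
        (∀ q : H.Walk u v, q.IsPath → walkWeight w p ≤ walkWeight w q) := by
  classical
  rintro u v ⟨p₀⟩
  have : Finite H.edgeSet := .of_equiv _ enum.symm
  let idx : Sym2 V → ℕ := fun e => if he : e ∈ H.edgeSet then enum ⟨e, he⟩ else 0
  have hidx : Set.InjOn idx H.edgeSet := fun e he f hf h => by
    simpa [idx, he, hf, Fin.val_inj] using h
  have hδ : ∀ e ∈ H.edgeSet, (w' - w) e = 2⁻¹ ^ (idx e + 2) := fun e he => by
    simp [idx, he, hw' ⟨e, he⟩]
  have hsplit (q : H.Walk u v) : walkWeight w' q = walkWeight w q + walkWeight (w' - w) q := by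
    rw [← walkWeight_add, add_sub_cancel]
  have hhalf' : ∀ e ∈ H.edgeSet, w e ∈ AddSubgroup.zmultiples (2⁻¹ : ℝ) := fun e he => by
    obtain ⟨k, hk⟩ := hhalf e he
    exact ⟨k, by simp only [hk, zsmul_eq_mul, div_eq_mul_inv]⟩
  have hw_le {p q : H.Walk u v} (hq : q.IsPath) (h : walkWeight w' p ≤ walkWeight w' q) :
      walkWeight w p ≤ walkWeight w q := by
    refine le_of_lt_add_of_mem_zmultiples (by norm_num) (walkWeight_mem hhalf' p)
      (walkWeight_mem hhalf' q) ?_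
    have := walkWeight_nonneg (f := w' - w) (fun e he => by rw [hδ e he]; positivity) p
    linarith [hsplit p, hsplit q, hq.isTrail.walkWeight_lt_half hidx hδ]
  obtain ⟨p, hp, hmin⟩ := Set.exists_min_image _ (walkWeight w') (finite_setOf_isPath u v)
    ⟨_, p₀.bypass_isPath⟩
  refine ⟨p, hp, hmin, fun q hq heq => ?_, fun q hq => hw_le hq (hmin q hq)⟩
  have hw_eq : walkWeight w q = walkWeight w p := (hw_le hp heq.le).antisymm (hw_le hq heq.ge)
  exact hq.eq_of_walkWeight_eq hidx hδ hp (by linarith [hsplit p, hsplit q])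

/-- Let `H` be a finite graph with positive edge weights `w`, each an
integer multiple of `1/2`, and enumerate the edges as `e₁, …, e_m`.  Define perturbed
weights `w'(eᵢ) = w(eᵢ) + 1/2^(i+1)`.  Then for every pair of vertices `u, v` of `H`
(joined by a walk) there is a unique shortest path between `u` and `v` with respect to
`w'`, and this path is also a shortest path between `u` and `v` with respect to `w`. -/
theorem statement_14 {V : Type*} [Fintype V] (H : SimpleGraph V)
    (w w' : Sym2 V → ℝ)
    (hpos : ∀ e ∈ H.edgeSet, 0 < w e)
    (hhalf : ∀ e ∈ H.edgeSet, ∃ q : ℤ, w e = (q : ℝ) / 2)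
    (m : ℕ) (enum : H.edgeSet ≃ Fin m)
    -- the edge `e` with `enum e = i - 1` is the `i`-th edge `eᵢ`, so its perturbation
    -- `1/2^(i+1)` is `1/2^((enum e) + 2)`
    (hw' : ∀ e : H.edgeSet, w' (e : Sym2 V) = w (e : Sym2 V) + 1 / 2 ^ ((enum e : ℕ) + 2)) :
    ∀ u v : V, H.Reachable u v →
      ∃ p : H.Walk u v, p.IsPath ∧
        (∀ q : H.Walk u v, q.IsPath → walkWeight w' p ≤ walkWeight w' q) ∧
        (∀ q : H.Walk u v, q.IsPath →
          walkWeight w' q = walkWeight w' p → q = p) ∧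
        (∀ q : H.Walk u v, q.IsPath → walkWeight w p ≤ walkWeight w q) :=
  statement_14_general H w w' hhalf m enum hw'
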